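/- Let M = (x y; z w) ∈ SL₂(ℤ) with z ≠ 0, x > 0 and y ≠ 0, and let M' := (0 1; 1 0) M (0 1; 1 0) = (w z; y x). Then n_{M'} = -n_M, where n_M := (x+w)/z - sign(z)·(3 + 12·s(w,|z|)). -/

import Mathlib

/-- The sawtooth function ((x)). -/
def saw (x : ℚ) : ℚ := if x.den = 1 then 0 else x - ⌊x⌋ - 1/2

/-- The Dedekind sum s(h,k) = Σ_{m=1}^{k} ((hm/k))((m/k)). -/
noncomputable def dedekindSum (h k : ℤ) : ℚ :=
  ∑ m ∈ Finset.Icc (1 : ℤ) k, saw (h * m / k) * saw (m / k)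

/-- The invariant n_M = (x+w)/z - sign(z)·(3 + 12·s(w,|z|)) for M = (x y; z w). -/
noncomputable def nMat (M : Matrix (Fin 2) (Fin 2) ℤ) : ℚ :=
  ((M 0 0 + M 1 1 : ℤ) : ℚ) / ((M 1 0 : ℤ) : ℚ)
    - ((M 1 0).sign : ℚ) * (3 + 12 * dedekindSum (M 1 1) |M 1 0|)

/-!
For `h` coprime to `k > 0`, `s(h,k) = (∑_{0<m<k} m·(hm mod k)) / k² - (k-1)/4`, and `m ↦ hm mod k`
permutes `(0,k)`. Counting the lattice points of `(0,k) × (0,h)` below and above the diagonal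
(none lies on it) with weight `m` then gives Dedekind reciprocity
`s(h,k) + s(k,h) = -1/4 + (h/k + k/h + 1/(hk))/12`.

For `M = (x y; z w)` we have `xw ≡ 1 (mod z)` and `yz ≡ -1 (mod x)`, so `s(w,|z|) = s(x,|z|)` and
`s(z,x) = -s(y,x)`. Reciprocity for `(x,|y|)` and `(x,|z|)` then turns `n_{M'}` into
`(z - y)/x + 12 s(y,x)` and `n_M` into its negative.
-/

open Finset

lemma saw_eq_ite_fract (x : ℚ) : saw x = if Int.fract x = 0 then 0 else Int.fract x - 1/2 := by
  have hden : x.den = 1 ↔ Int.fract x = 0 := by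
    rw [Rat.den_eq_one_iff, Int.fract_eq_zero_iff]
    exact ⟨fun h => ⟨x.num, h⟩, fun ⟨n, hn⟩ => by rw [← hn]; simp⟩
  by_cases hx : Int.fract x = 0
  · rw [saw, if_pos (hden.2 hx), if_pos hx]
  · rw [saw, if_neg (mt hden.1 hx), if_neg hx, Int.fract]

lemma saw_intCast (n : ℤ) : saw n = 0 := by
  simp [saw_eq_ite_fract]

lemma saw_neg (x : ℚ) : saw (-x) = -saw x := by
  rw [saw_eq_ite_fract, saw_eq_ite_fract]
  by_cases hx : Int.fract x = 0
  · simp [hx, Int.fract_neg_eq_zero.2 hx]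
  · rw [if_neg hx, if_neg (mt Int.fract_neg_eq_zero.1 hx), Int.fract_neg hx]
    ring

lemma saw_intCast_div {a k : ℤ} (hk : 0 < k) (ha : ¬ k ∣ a) :
    saw (a / k) = (a % k : ℤ) / k - 1/2 := by
  lift k to ℕ using hk.le
  have hfract : Int.fract ((a : ℚ) / (k : ℤ)) = (a % k : ℤ) / k := by
    simpa using Int.fract_div_intCast_eq_div_intCast_mod (k := ℚ) (m := a) (n := k)
  have hmod : ((a % k : ℤ) : ℚ) ≠ 0 := by exact_mod_cast mt Int.dvd_of_emod_eq_zero ha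
  rw [saw_eq_ite_fract, hfract, if_neg (div_ne_zero hmod (by exact_mod_cast hk.ne'))]
  push_cast
  ring

lemma dedekindSum_neg_left (h k : ℤ) : dedekindSum (-h) k = -dedekindSum h k := by
  rw [dedekindSum, dedekindSum, ← sum_neg_distrib]
  refine sum_congr rfl fun m _ => ?_
  rw [Int.cast_neg, neg_mul, neg_div, saw_neg, neg_mul]

lemma not_dvd_mul_of_isCoprime {h k m : ℤ} (hco : IsCoprime h k) (hm : 0 < m) (hmk : m < k) :
    ¬ k ∣ h * m := fun hdvd =>
  (Int.le_of_dvd hm (hco.symm.dvd_of_dvd_mul_left hdvd)).not_gt hmk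

lemma sum_Ioo_emod_mul {M : Type*} [AddCommMonoid M] {h k : ℤ} (hk : 0 < k) (hco : IsCoprime h k)
    (f : ℤ → M) : ∑ m ∈ Ioo 0 k, f (h * m % k) = ∑ m ∈ Ioo 0 k, f m := by
  have hinj : Set.InjOn (fun m => h * m % k) (Ioo 0 k) := by
    intro m hm m' hm' hmm'
    simp only [coe_Ioo, Set.mem_Ioo] at hm hm'
    have hdvd : k ∣ m' - m :=
      hco.symm.dvd_of_dvd_mul_left (by rw [mul_sub]; exact Int.ModEq.dvd hmm')
    have := Int.eq_zero_of_abs_lt_dvd hdvd (by rw [abs_lt]; omega)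
    omega
  have hmaps : ∀ m ∈ Ioo 0 k, h * m % k ∈ Ioo 0 k := by
    intro m hm
    rw [mem_Ioo] at hm ⊢
    have := mt Int.dvd_of_emod_eq_zero (not_dvd_mul_of_isCoprime hco hm.1 hm.2)
    have := Int.emod_nonneg (h * m) hk.ne'
    exact ⟨by omega, Int.emod_lt_of_pos _ hk⟩
  have himage : (Ioo 0 k).image (fun m => h * m % k) = Ioo 0 k :=
    eq_of_subset_of_card_le (image_subset_iff.2 hmaps) (card_image_of_injOn hinj).ge
  rw [← sum_image hinj, himage]

lemma natCast_card_Ioo_zero {n : ℤ} (hn : 0 < n) : (#(Ioo 0 n) : ℤ) = n - 1 := by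
  rw [Int.card_Ioo, Int.toNat_of_nonneg (by omega), sub_zero]

lemma sum_Ioo_zero_add_one {M : Type*} [AddCommMonoid M] (f : ℤ → M) {n : ℤ} (hn : 0 < n) :
    ∑ m ∈ Ioo 0 (n + 1), f m = ∑ m ∈ Ioo 0 n, f m + f n := by
  have : Ioo 0 (n + 1) = insert n (Ioo 0 n) := by ext; simp; omega
  rw [this, sum_insert (by simp), add_comm]

lemma two_mul_sum_Ioo_id {n : ℤ} (hn : 0 < n) : 2 * ∑ m ∈ Ioo 0 n, m = n * (n - 1) := by
  induction n, hn using Int.leInduction with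
  | base => rfl
  | succ n hn ih => rw [sum_Ioo_zero_add_one _ hn, mul_add, ih]; ring

lemma six_mul_sum_Ioo_sq {n : ℤ} (hn : 0 < n) :
    6 * ∑ m ∈ Ioo 0 n, m ^ 2 = (n - 1) * n * (2 * n - 1) := by
  induction n, hn using Int.leInduction with
  | base => rfl
  | succ n hn ih => rw [sum_Ioo_zero_add_one _ hn, mul_add, ih]; ring

lemma filter_Ioo_mul_le {a b c : ℤ} (hb : 0 < b) (hac : a < b * c) :
    (Ioo 0 c).filter (fun n => b * n ≤ a) = Ioo 0 (a / b + 1) := by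
  have hlt : a / b < c := Int.ediv_lt_of_lt_mul hb (by rwa [mul_comm])
  ext n
  simp only [mem_filter, mem_Ioo, mul_comm b n, ← Int.le_ediv_iff_mul_le hb]
  omega

lemma dedekindSum_eq_sum_Ioo (h : ℤ) {k : ℤ} (hk : 0 < k) :
    dedekindSum h k = ∑ m ∈ Ioo 0 k, saw (h * m / k) * saw (m / k) := by
  have : Icc 1 k = insert k (Ioo 0 k) := by ext; simp; omega
  rw [dedekindSum, this, sum_insert (by simp),
    mul_div_cancel_right₀ _ (by exact_mod_cast hk.ne' : (k : ℚ) ≠ 0), saw_intCast, zero_mul,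
    zero_add]

noncomputable def sumMulEmod (h k : ℤ) : ℤ := ∑ m ∈ Ioo 0 k, m * (h * m % k)

lemma dedekindSum_eq_sumMulEmod {h k : ℤ} (hk : 0 < k) (hco : IsCoprime h k) :
    dedekindSum h k = sumMulEmod h k / k ^ 2 - (k - 1) / 4 := by
  have hk' : (k : ℚ) ≠ 0 := by exact_mod_cast hk.ne'
  have hterm : ∀ m ∈ Ioo 0 k, saw (h * m / k) * saw (m / k)
      = (m * (h * m % k) : ℤ) / k ^ 2 - ((h * m % k + m : ℤ) : ℚ) / (2 * k) + 1 / 4 := by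
    intro m hm
    rw [mem_Ioo] at hm
    have hm' : ¬ k ∣ m := fun hdvd => (Int.le_of_dvd hm.1 hdvd).not_gt hm.2
    rw [← Int.cast_mul, saw_intCast_div hk (not_dvd_mul_of_isCoprime hco hm.1 hm.2),
      saw_intCast_div hk hm', Int.emod_eq_of_lt hm.1.le hm.2]
    field_simp
    push_cast
    ring
  have hsum : ∑ m ∈ Ioo 0 k, (h * m % k + m) = k * (k - 1) := by
    have hperm : ∑ m ∈ Ioo 0 k, h * m % k = ∑ m ∈ Ioo 0 k, m :=
      sum_Ioo_emod_mul hk hco (fun m => m)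
    rw [sum_add_distrib, hperm, ← two_mul, two_mul_sum_Ioo_id hk]
  have hcard : (#(Ioo 0 k) : ℚ) = k - 1 := by exact_mod_cast natCast_card_Ioo_zero hk
  rw [dedekindSum_eq_sum_Ioo h hk, sum_congr rfl hterm, sum_add_distrib, sum_sub_distrib,
    ← sum_div, ← sum_div, ← Int.cast_sum, ← Int.cast_sum, hsum, sum_const, nsmul_eq_mul, hcard,
    sumMulEmod]
  field_simp
  push_cast
  ring

lemma lattice_count {h k : ℤ} (hh : 0 < h) (hk : 0 < k) (hco : IsCoprime h k) :
    2 * ∑ m ∈ Ioo 0 k, m * (h * m / k) + ∑ n ∈ Ioo 0 h, k * n / h * (k * n / h + 1)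
      = (h - 1) * (k * (k - 1)) := by
  have hrow : ∀ m ∈ Ioo 0 k,
      ∑ n ∈ Ioo 0 h, (if k * n ≤ h * m then 2 * m else 0) = 2 * (m * (h * m / k)) := by
    intro m hm
    rw [mem_Ioo] at hm
    have hq : 0 ≤ h * m / k := Int.ediv_nonneg (mul_pos hh hm.1).le hk.le
    rw [← sum_filter, filter_Ioo_mul_le hk (by nlinarith), sum_const, nsmul_eq_mul,
      natCast_card_Ioo_zero (by omega)]
    ring
  have hcol : ∀ n ∈ Ioo 0 h,
      ∑ m ∈ Ioo 0 k, (if h * m ≤ k * n then 2 * m else 0) = k * n / h * (k * n / h + 1) := by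
    intro n hn
    rw [mem_Ioo] at hn
    have hq : 0 ≤ k * n / h := Int.ediv_nonneg (mul_pos hk hn.1).le hh.le
    rw [← sum_filter, filter_Ioo_mul_le hh (by nlinarith), ← mul_sum,
      two_mul_sum_Ioo_id (by omega)]
    ring
  have hsplit : ∀ m ∈ Ioo 0 k, ∀ n,
      (if k * n ≤ h * m then 2 * m else 0) + (if h * m ≤ k * n then 2 * m else 0) = 2 * m := by
    intro m hm n
    rw [mem_Ioo] at hm
    have hne : k * n ≠ h * m := fun he => not_dvd_mul_of_isCoprime hco hm.1 hm.2 ⟨n, he.symm⟩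
    split_ifs <;> omega
  calc 2 * ∑ m ∈ Ioo 0 k, m * (h * m / k) + ∑ n ∈ Ioo 0 h, k * n / h * (k * n / h + 1)
      = ∑ m ∈ Ioo 0 k, ∑ n ∈ Ioo 0 h,
          ((if k * n ≤ h * m then 2 * m else 0) + (if h * m ≤ k * n then 2 * m else 0)) := by
        rw [mul_sum, ← sum_congr rfl hrow, ← sum_congr rfl hcol, sum_comm (s := Ioo 0 h),
          ← sum_add_distrib]
        exact sum_congr rfl fun m _ => sum_add_distrib.symm
    _ = ∑ m ∈ Ioo 0 k, ∑ _n ∈ Ioo 0 h, 2 * m :=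
        sum_congr rfl fun m hm => sum_congr rfl fun n _ => hsplit m hm n
    _ = (h - 1) * (k * (k - 1)) := by
        simp only [sum_const, nsmul_eq_mul, natCast_card_Ioo_zero hh]
        rw [← mul_sum, ← mul_sum, two_mul_sum_Ioo_id hk]

lemma sumMulEmod_reciprocity {h k : ℤ} (hh : 0 < h) (hk : 0 < k) (hco : IsCoprime h k) :
    12 * h ^ 2 * sumMulEmod h k + 12 * k ^ 2 * sumMulEmod k h
      = 3 * h ^ 2 * k ^ 2 * (h + k - 3) + h ^ 3 * k + h * k ^ 3 + h * k := by
  have hT : k * ∑ m ∈ Ioo 0 k, m * (h * m / k) = h * ∑ m ∈ Ioo 0 k, m ^ 2 - sumMulEmod h k := by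
    rw [sumMulEmod, mul_sum, mul_sum, ← sum_sub_distrib]
    exact sum_congr rfl fun m _ => by linear_combination m * Int.mul_ediv_add_emod (h * m) k
  have hG : h ^ 2 * ∑ n ∈ Ioo 0 h, k * n / h * (k * n / h + 1)
      = (k ^ 2 + 1) * ∑ n ∈ Ioo 0 h, n ^ 2 - 2 * k * sumMulEmod k h
        + h * (k - 1) * ∑ n ∈ Ioo 0 h, n := by
    have hsq : ∑ n ∈ Ioo 0 h, (k * n % h) ^ 2 = ∑ n ∈ Ioo 0 h, n ^ 2 :=
      sum_Ioo_emod_mul hh hco.symm (fun r => r ^ 2)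
    have hid : ∑ n ∈ Ioo 0 h, k * n % h = ∑ n ∈ Ioo 0 h, n :=
      sum_Ioo_emod_mul hh hco.symm (fun r => r)
    calc h ^ 2 * ∑ n ∈ Ioo 0 h, k * n / h * (k * n / h + 1)
        = ∑ n ∈ Ioo 0 h, (k ^ 2 * n ^ 2 - 2 * k * (n * (k * n % h)) + (k * n % h) ^ 2
            + h * (k * n) - h * (k * n % h)) := by
          rw [mul_sum]
          refine sum_congr rfl fun n _ => ?_
          linear_combination (k * n - k * n % h + h + h * (k * n / h)) *
            Int.mul_ediv_add_emod (k * n) h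
      _ = _ := by
          have hlin : ∑ n ∈ Ioo 0 h, k * n = k * ∑ n ∈ Ioo 0 h, n := by rw [mul_sum]
          simp only [sum_add_distrib, sum_sub_distrib, ← mul_sum, hlin, hsq, hid, sumMulEmod]
          ring
  linear_combination (12 * h ^ 2) * hT + (6 * k) * hG - (6 * h ^ 2 * k) * lattice_count hh hk hco
    + (2 * h ^ 3) * six_mul_sum_Ioo_sq hk + (k * (k ^ 2 + 1)) * six_mul_sum_Ioo_sq hh
    + (3 * h * k * (k - 1)) * two_mul_sum_Ioo_id hh

theorem dedekindSum_reciprocity {h k : ℤ} (hh : 0 < h) (hk : 0 < k) (hco : IsCoprime h k) :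
    dedekindSum h k + dedekindSum k h = -1 / 4 + (h / k + k / h + 1 / (h * k)) / 12 := by
  have key : (12 * h ^ 2 * sumMulEmod h k + 12 * k ^ 2 * sumMulEmod k h : ℚ)
      = 3 * h ^ 2 * k ^ 2 * (h + k - 3) + h ^ 3 * k + h * k ^ 3 + h * k := by
    exact_mod_cast sumMulEmod_reciprocity hh hk hco
  have hh' : (h : ℚ) ≠ 0 := by exact_mod_cast hh.ne'
  have hk' : (k : ℚ) ≠ 0 := by exact_mod_cast hk.ne'
  rw [dedekindSum_eq_sumMulEmod hk hco, dedekindSum_eq_sumMulEmod hh hco.symm]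
  field_simp
  linear_combination 4 * key

lemma isCoprime_of_mul_modEq_one {h h' k : ℤ} (hinv : h * h' ≡ 1 [ZMOD k]) : IsCoprime h k := by
  obtain ⟨c, hc⟩ := Int.modEq_iff_dvd.1 hinv
  exact ⟨h', c, by linarith⟩

lemma dedekindSum_eq_of_mul_modEq_one {h h' k : ℤ} (hk : 0 < k) (hinv : h * h' ≡ 1 [ZMOD k]) :
    dedekindSum h' k = dedekindSum h k := by
  have hco := isCoprime_of_mul_modEq_one hinv
  have hco' := isCoprime_of_mul_modEq_one (k := k) (h' := h) (by rwa [mul_comm])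
  have hsum : sumMulEmod h' k = sumMulEmod h k := by
    rw [sumMulEmod, ← sum_Ioo_emod_mul hk hco]
    refine sum_congr rfl fun m hm => ?_
    rw [mem_Ioo] at hm
    have hmod : h' * (h * m % k) ≡ m [ZMOD k] :=
      calc h' * (h * m % k) ≡ h' * (h * m) [ZMOD k] := (Int.mod_modEq _ _).mul_left h'
        _ = h * h' * m := by ring
        _ ≡ 1 * m [ZMOD k] := hinv.mul_right m
        _ = m := one_mul m
    rw [hmod.eq, Int.emod_eq_of_lt hm.1.le hm.2, mul_comm]
  rw [dedekindSum_eq_sumMulEmod hk hco', dedekindSum_eq_sumMulEmod hk hco, hsum]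

lemma dedekindSum_reciprocity_of_ne_zero {h k : ℤ} (hh : 0 < h) (hk : k ≠ 0)
    (hco : IsCoprime h k) :
    (k.sign : ℚ) * (3 + 12 * dedekindSum h |k|)
      = h / k + k / h + 1 / (h * k) - 12 * dedekindSum k h := by
  have hh' : (h : ℚ) ≠ 0 := by exact_mod_cast hh.ne'
  have hk' : (k : ℚ) ≠ 0 := by exact_mod_cast hk
  rcases hk.lt_or_gt with hneg | hpos
  · have hrec := dedekindSum_reciprocity hh (neg_pos.2 hneg) hco.neg_right
    rw [dedekindSum_neg_left] at hrec
    rw [Int.sign_eq_neg_one_of_neg hneg, abs_of_neg hneg]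
    push_cast at hrec ⊢
    field_simp at hrec ⊢
    linear_combination -hrec / 4
  · have hrec := dedekindSum_reciprocity hh hpos hco
    rw [Int.sign_eq_one_of_pos hpos, abs_of_pos hpos]
    push_cast
    field_simp at hrec ⊢
    linear_combination hrec / 4

theorem nMat_conj_swap (M M' : Matrix (Fin 2) (Fin 2) ℤ)
    (hdet : M.det = 1) (hz : M 1 0 ≠ 0) (hx : 0 < M 0 0) (hy : M 0 1 ≠ 0)
    (hM' : M' = !![0, 1; 1, 0] * M * !![0, 1; 1, 0]) :
    nMat M' = - nMat M := by
  obtain ⟨x, y, z, w, rfl⟩ : ∃ x y z w, M = !![x, y; z, w] := ⟨_, _, _, _, M.eta_fin_two⟩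
  simp only [Matrix.mul_fin_two, zero_mul, one_mul, mul_zero, mul_one, zero_add, add_zero] at hM'
  subst hM'
  simp only [nMat, Matrix.det_fin_two_of, Matrix.of_apply, Matrix.cons_val', Matrix.cons_val_zero,
    Matrix.cons_val_one, Matrix.empty_val', Matrix.cons_val_fin_one] at hdet hz hx hy ⊢
  have hsw : dedekindSum w |z| = dedekindSum x |z| :=
    dedekindSum_eq_of_mul_modEq_one (abs_pos.2 hz)
      (Int.modEq_abs.2 (Int.modEq_iff_dvd.2 ⟨-y, by linarith⟩))
  have hsz : dedekindSum z x = -dedekindSum y x := by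
    rw [← dedekindSum_eq_of_mul_modEq_one (h := y) (h' := -z) hx
      (Int.modEq_iff_dvd.2 ⟨w, by linarith⟩), dedekindSum_neg_left, neg_neg]
  rw [dedekindSum_reciprocity_of_ne_zero hx hy ⟨w, -z, by linarith⟩, hsw,
    dedekindSum_reciprocity_of_ne_zero hx hz ⟨w, -y, by linarith⟩, hsz]
  have hx' : (x : ℚ) ≠ 0 := by exact_mod_cast hx.ne'
  have hy' : (y : ℚ) ≠ 0 := by exact_mod_cast hy
  have hz' : (z : ℚ) ≠ 0 := by exact_mod_cast hz
  have hdet' : (x * w - y * z : ℚ) = 1 := by exact_mod_cast hdet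
  push_cast
  field_simp
  linear_combination (y + z : ℚ) * hdet'
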